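/- On ℝ⁸ with coordinates (x₁, …, x₈), consider the eight vector fields giving the adjoint representation of sl(3,ℝ) (written as component lists with respect to ∂/∂x₁, …, ∂/∂x₈): X₁ = (0, x₂, 2x₃, −x₄, 0, x₆, −2x₇, −x₈), X₂ = (x₄, x₅−x₁, x₆, 0, −x₄, 0, 0, −x₇), X₃ = (x₇, x₈, −x₅−2x₁, 0, 0, −x₄, 0, 0), X₄ = (−x₂, 0, 0, −x₅+x₁, x₂, x₃, −x₈, 0), X₅ = (0, −x₂, x₃, x₄, 0, 2x₆, −x₇, −2x₈), X₆ = (0, 0, −x₂, x₇, x₈, −2x₅−x₁, 0, 0), X₇ = (−x₃, 0, 0, −x₆, 0, 0, x₅+2x₁, x₂), X₈ = (0, −x₃, 0, 0, −x₆, 0, x₄, 2x₅+x₁). Then the polynomial I₁ = x₅² + x₁x₅ + x₁² + x₇x₃ + x₈x₆ + x₄x₂ is a joint invariant: X_k I₁ = 0 on ℝ⁸ for every k = 1, …, 8. -/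

import Mathlib

/-- The action of a vector field `X` on a smooth function `f`:
`(X f)(q) = Df(q)(X(q))`. -/
noncomputable def vAct {n : ℕ} (X : (Fin n → ℝ) → (Fin n → ℝ))
    (f : (Fin n → ℝ) → ℝ) : (Fin n → ℝ) → ℝ :=
  fun q => fderiv ℝ f q (X q)

/-- The eight fundamental vector fields of the adjoint representation of
`sl(3, ℝ)` on `ℝ⁸` (0-indexed coordinates `x 0, …, x 7` for `x₁, …, x₈`). -/
noncomputable def sl3AdX : Fin 8 → (Fin 8 → ℝ) → (Fin 8 → ℝ) :=
  ![fun x => ![0, x 1, 2 * x 2, -x 3, 0, x 5, -2 * x 6, -x 7],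
    fun x => ![x 3, x 4 - x 0, x 5, 0, -x 3, 0, 0, -x 6],
    fun x => ![x 6, x 7, -x 4 - 2 * x 0, 0, 0, -x 3, 0, 0],
    fun x => ![-x 1, 0, 0, -x 4 + x 0, x 1, x 2, -x 7, 0],
    fun x => ![0, -x 1, x 2, x 3, 0, 2 * x 5, -x 6, -2 * x 7],
    fun x => ![0, 0, -x 1, x 6, x 7, -2 * x 4 - x 0, 0, 0],
    fun x => ![-x 2, 0, 0, -x 5, 0, 0, x 4 + 2 * x 0, x 1],
    fun x => ![0, -x 2, 0, 0, -x 5, 0, x 3, 2 * x 4 + x 0]]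

/-! A vector field acts on differentiable functions as a derivation, so `X I₁` is obtained from
the components of `X` by the Leibniz rule; for each of the eight fields the resulting quadratic
polynomial cancels identically. -/

section VectorFieldAction

variable {n : ℕ} (X : (Fin n → ℝ) → (Fin n → ℝ)) {f g : (Fin n → ℝ) → ℝ} {q : Fin n → ℝ}

theorem vAct_add (hf : DifferentiableAt ℝ f q) (hg : DifferentiableAt ℝ g q) :
    vAct X (fun x => f x + g x) q = vAct X f q + vAct X g q := by
  simp only [vAct, fderiv_fun_add hf hg, add_apply]

theorem vAct_mul (hf : DifferentiableAt ℝ f q) (hg : DifferentiableAt ℝ g q) :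
    vAct X (fun x => f x * g x) q = f q * vAct X g q + g q * vAct X f q := by
  simp only [vAct, fderiv_fun_mul hf hg, add_apply, smul_apply, smul_eq_mul]

theorem vAct_pow (hf : DifferentiableAt ℝ f q) (m : ℕ) :
    vAct X (fun x => f x ^ m) q = m * f q ^ (m - 1) * vAct X f q := by
  simp only [vAct, fderiv_fun_pow m hf, smul_apply, nsmul_eq_mul, smul_eq_mul]

theorem vAct_apply (i : Fin n) : vAct X (fun x => x i) q = X q i := by
  simp only [vAct, (hasFDerivAt_apply i q).fderiv, ContinuousLinearMap.proj_apply]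

end VectorFieldAction

/-- The quadratic polynomial `I₁ = x₅² + x₁x₅ + x₁² + x₇x₃ + x₈x₆ + x₄x₂` is a
joint invariant of the adjoint representation of `sl(3, ℝ)`. -/
theorem sl3_adjoint_invariant_I1 :
    ∀ k : Fin 8, ∀ x : Fin 8 → ℝ,
      vAct (sl3AdX k)
        (fun x => x 4 ^ 2 + x 0 * x 4 + x 0 ^ 2 + x 6 * x 2 +
          x 7 * x 5 + x 3 * x 1) x = 0 := by
  intro k x
  simp (disch := fun_prop) only [vAct_add, vAct_mul, vAct_pow, vAct_apply]
  fin_cases k <;>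
    simp only [sl3AdX, Fin.zero_eta, Fin.mk_one, Fin.reduceFinMk, Matrix.cons_val] <;>
    ring
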